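/- arXiv:1901.02975 — 2 statements merged into one kernel-verified Lean document; each statement's English description precedes it below -/
import Mathlib

section
/- (MRS identity.) For every q ≥ 1, every n > 0 and every P ∈ Π_n^q, sup_{x ∈ ℝ^q} |P(x)| = sup_{x ∈ [−√2 n, √2 n]^q} |P(x)|. -/
open MeasureTheory
open scoped ENNReal

noncomputable def psi (k : ℕ) (x : ℝ) : ℝ :=
  ((-1 : ℝ) ^ k / (Real.pi ^ ((1 : ℝ)/4) * (2 : ℝ) ^ ((k : ℝ)/2) * Real.sqrt (Nat.factorial k))) *
    Real.exp (x ^ 2 / 2) * iteratedDeriv k (fun t : ℝ => Real.exp (-t ^ 2)) x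

noncomputable def psiM {q : ℕ} (k : Fin q → ℕ) (x : EuclideanSpace ℝ (Fin q)) : ℝ :=
  ∏ j, psi (k j) (x j)

def IsAdmissible (H : ℝ → ℝ) : Prop :=
  ContDiff ℝ (⊤ : ℕ∞) H ∧ (∀ t : ℝ, 0 ≤ t → H t ∈ Set.Icc (0 : ℝ) 1) ∧
    (∀ t : ℝ, 0 ≤ t → t ≤ 1/2 → H t = 1) ∧ (∀ t : ℝ, 1 ≤ t → H t = 0)

noncomputable def hermKernel {q : ℕ} (H : ℝ → ℝ) (n : ℝ) (x y : EuclideanSpace ℝ (Fin q)) : ℝ :=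
  ∑' k : Fin q → ℕ, H (Real.sqrt (∑ j, (k j : ℝ)) / n) * psiM k x * psiM k y

noncomputable def sigmaOp {q : ℕ} (H : ℝ → ℝ) (n : ℝ) (f : EuclideanSpace ℝ (Fin q) → ℝ)
    (x : EuclideanSpace ℝ (Fin q)) : ℝ :=
  ∫ y, hermKernel H n x y * f y

noncomputable def weightedPolySpace (q : ℕ) (n : ℝ) :
    Submodule ℝ (EuclideanSpace ℝ (Fin q) → ℝ) :=
  Submodule.span ℝ {f | ∃ k : Fin q → ℕ, ((∑ j, (k j : ℝ)) < n ^ 2) ∧ f = psiM k}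

noncomputable def degApprox (q : ℕ) (n : ℝ) (p : ℝ≥0∞)
    (f : EuclideanSpace ℝ (Fin q) → ℝ) : ℝ≥0∞ :=
  ⨅ P : weightedPolySpace q n, eLpNorm (f - (P : EuclideanSpace ℝ (Fin q) → ℝ)) p volume

def cball {q : ℕ} (x₀ : EuclideanSpace ℝ (Fin q)) (r : ℝ) : Set (EuclideanSpace ℝ (Fin q)) :=
  {y | ∀ i, |x₀ i - y i| ≤ r}

def MemX (q : ℕ) (p : ℝ≥0∞) (f : EuclideanSpace ℝ (Fin q) → ℝ) : Prop :=
  MemLp f p volume ∧ Filter.Tendsto (fun n : ℕ => degApprox q n p f) Filter.atTop (nhds 0)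

noncomputable def WNorm (q : ℕ) (p : ℝ≥0∞) (γ : ℝ) (f : EuclideanSpace ℝ (Fin q) → ℝ) : ℝ≥0∞ :=
  eLpNorm f p volume +
    ⨆ n : ℕ, ENNReal.ofReal ((2 : ℝ) ^ ((n : ℝ) * γ)) * degApprox q ((2 : ℝ) ^ n) p f

def MemW (q : ℕ) (p : ℝ≥0∞) (γ : ℝ) (f : EuclideanSpace ℝ (Fin q) → ℝ) : Prop :=
  MemX q p f ∧ WNorm q p γ f < ⊤

def MemWLoc (q : ℕ) (p : ℝ≥0∞) (γ : ℝ) (x₀ : EuclideanSpace ℝ (Fin q))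
    (f : EuclideanSpace ℝ (Fin q) → ℝ) : Prop :=
  ∃ U ∈ nhds x₀, ∀ φ : EuclideanSpace ℝ (Fin q) → ℝ,
    ContDiff ℝ (⊤ : ℕ∞) φ → tsupport φ ⊆ U → MemW q p γ (fun x => φ x * f x)

noncomputable def locNorm (q : ℕ) (H : ℝ → ℝ) (γ : ℝ) (x₀ : EuclideanSpace ℝ (Fin q))
    (r : ℝ) (g : EuclideanSpace ℝ (Fin q) → ℝ) : ℝ≥0∞ :=
  eLpNorm g ⊤ volume +
    ⨆ n : ℕ, ENNReal.ofReal ((n : ℝ) ^ γ) *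
      eLpNorm (g - sigmaOp H (n : ℝ) g) ⊤ (volume.restrict (cball x₀ r))


section Aux
open Polynomial

lemma iter_poly (k : ℕ) : ∃ q : Polynomial ℝ, q.natDegree ≤ k ∧
    ∀ x : ℝ, iteratedDeriv k (fun t : ℝ => Real.exp (-t ^ 2)) x = q.eval x * Real.exp (-x ^ 2) := by
  induction k with
  | zero => exact ⟨1, by simp, by simp [iteratedDeriv_zero]⟩
  | succ k ih =>
    obtain ⟨q, hqd, hq⟩ := ih
    refine ⟨q.derivative - Polynomial.C 2 * Polynomial.X * q, ?_, ?_⟩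
    · apply le_trans (Polynomial.natDegree_sub_le _ _)
      apply max_le
      · exact le_trans q.natDegree_derivative_le (by omega)
      · calc (Polynomial.C (2:ℝ) * Polynomial.X * q).natDegree
            ≤ (Polynomial.C (2:ℝ) * Polynomial.X).natDegree + q.natDegree :=
              Polynomial.natDegree_mul_le
          _ ≤ k + 1 := by
              have h1 : (Polynomial.C (2:ℝ) * Polynomial.X).natDegree ≤ 1 := by
                apply le_trans Polynomial.natDegree_mul_le
                simp
              omega
    · intro x
      rw [iteratedDeriv_succ, funext hq]
      have h2 : HasDerivAt (fun x : ℝ => -x ^ 2) (-(2 * x)) x := by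
        simpa using (hasDerivAt_pow 2 x).fun_neg
      have hd : HasDerivAt (fun x : ℝ => q.eval x * Real.exp (-x ^ 2))
          (q.derivative.eval x * Real.exp (-x ^ 2)
            + q.eval x * (Real.exp (-x ^ 2) * (-(2 * x)))) x :=
        (q.hasDerivAt x).mul h2.exp
      rw [hd.deriv]
      simp only [Polynomial.eval_sub, Polynomial.eval_mul, Polynomial.eval_C, Polynomial.eval_X]
      ring

lemma psi_poly (k : ℕ) : ∃ p : Polynomial ℝ, p.natDegree ≤ k ∧
    ∀ x : ℝ, psi k x = p.eval x * Real.exp (-x ^ 2 / 2) := by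
  obtain ⟨q, hqd, hq⟩ := iter_poly k
  set c : ℝ := ((-1 : ℝ) ^ k /
    (Real.pi ^ ((1 : ℝ)/4) * (2 : ℝ) ^ ((k : ℝ)/2) * Real.sqrt (Nat.factorial k))) with hc
  refine ⟨Polynomial.C c * q, ?_, ?_⟩
  · exact le_trans Polynomial.natDegree_mul_le (by simp [hqd])
  · intro x
    have hexp : Real.exp (x ^ 2 / 2) * Real.exp (-x ^ 2) = Real.exp (-x ^ 2 / 2) := by
      rw [← Real.exp_add]; congr 1; ring
    calc psi k x = c * Real.exp (x ^ 2 / 2) * (q.eval x * Real.exp (-x ^ 2)) := by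
          rw [psi, hq]
      _ = (c * q.eval x) * (Real.exp (x ^ 2 / 2) * Real.exp (-x ^ 2)) := by ring
      _ = (Polynomial.C c * q).eval x * Real.exp (-x ^ 2 / 2) := by
          rw [hexp, Polynomial.eval_mul, Polynomial.eval_C]

lemma psi_continuous (k : ℕ) : Continuous (psi k) := by
  obtain ⟨p, _, hp⟩ := psi_poly k
  rw [show psi k = fun x => p.eval x * Real.exp (-x ^ 2 / 2) from funext hp]
  fun_prop

lemma psiM_slice {q : ℕ} (k : Fin q → ℕ) (x : EuclideanSpace ℝ (Fin q)) (i : Fin q) :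
    ∃ p : Polynomial ℝ, p.natDegree ≤ k i ∧
      ∀ t : ℝ, psiM k (WithLp.toLp 2 (Function.update x i t)) = p.eval t * Real.exp (-t ^ 2 / 2) := by
  obtain ⟨pk, hpkd, hpk⟩ := psi_poly (k i)
  refine ⟨Polynomial.C (∏ j ∈ Finset.univ.erase i, psi (k j) (x j)) * pk, ?_, ?_⟩
  · refine le_trans Polynomial.natDegree_mul_le ?_
    rw [Polynomial.natDegree_C, zero_add]
    exact hpkd
  · intro t
    have hprod : psiM k (WithLp.toLp 2 (Function.update x i t))
        = psi (k i) t * ∏ j ∈ Finset.univ.erase i, psi (k j) (x j) := by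
      rw [psiM, ← Finset.mul_prod_erase Finset.univ _ (Finset.mem_univ i)]
      congr 1
      · simp [Function.update_self]
      · apply Finset.prod_congr rfl
        intro j hj
        simp [Function.update_of_ne (Finset.ne_of_mem_erase hj)]
    rw [hprod, hpk, Polynomial.eval_mul, Polynomial.eval_C]
    ring

lemma span_slice (q : ℕ) (n : ℝ) (hn : 0 < n) :
    ∀ P ∈ weightedPolySpace q n, ∀ (x : EuclideanSpace ℝ (Fin q)) (i : Fin q),
      ∃ p : Polynomial ℝ, ((p.natDegree : ℝ) < n ^ 2) ∧
        ∀ t : ℝ, P (WithLp.toLp 2 (Function.update x i t)) = p.eval t * Real.exp (-t ^ 2 / 2) := by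
  intro P hP
  rw [weightedPolySpace] at hP
  induction hP using Submodule.span_induction with
  | mem f hf =>
    obtain ⟨k, hk, rfl⟩ := hf
    intro x i
    obtain ⟨p, hpd, hp⟩ := psiM_slice k x i
    refine ⟨p, ?_, hp⟩
    calc (p.natDegree : ℝ) ≤ (k i : ℝ) := by exact_mod_cast hpd
      _ ≤ ∑ j, (k j : ℝ) := Finset.single_le_sum (f := fun j => ((k j : ℕ) : ℝ)) (fun j _ => by positivity) (Finset.mem_univ i)
      _ < n ^ 2 := hk
  | zero =>
    intro x i
    exact ⟨0, by simpa using (by positivity : (0:ℝ) < n ^ 2), by simp⟩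
  | add f g _ _ hf hg =>
    intro x i
    obtain ⟨p, hpd, hp⟩ := hf x i
    obtain ⟨r, hrd, hr⟩ := hg x i
    refine ⟨p + r, ?_, ?_⟩
    · have h1 := Polynomial.natDegree_add_le p r
      have h2 : ((max p.natDegree r.natDegree : ℕ) : ℝ) < n ^ 2 := by
        rcases max_cases p.natDegree r.natDegree with ⟨h, _⟩ | ⟨h, _⟩ <;> rw [h] <;> assumption
      calc (((p + r).natDegree : ℕ) : ℝ) ≤ ((max p.natDegree r.natDegree : ℕ) : ℝ) := by
            exact_mod_cast h1
        _ < n ^ 2 := h2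
    · intro t
      simp only [Pi.add_apply, Polynomial.eval_add]
      rw [hp t, hr t]; ring
  | smul c f _ hf =>
    intro x i
    obtain ⟨p, hpd, hp⟩ := hf x i
    refine ⟨Polynomial.C c * p, ?_, ?_⟩
    · have h3 : (Polynomial.C c * p).natDegree ≤ p.natDegree := by
        refine le_trans Polynomial.natDegree_mul_le ?_
        rw [Polynomial.natDegree_C, zero_add]
      calc (((Polynomial.C c * p).natDegree : ℕ) : ℝ) ≤ ((p.natDegree : ℕ) : ℝ) := by
            exact_mod_cast h3
        _ < n ^ 2 := hpd
    · intro t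
      simp only [Pi.smul_apply, smul_eq_mul, Polynomial.eval_mul, Polynomial.eval_C]
      rw [hp t]; ring

lemma span_continuous (q : ℕ) (n : ℝ) : ∀ P ∈ weightedPolySpace q n, Continuous P := by
  intro P hP
  rw [weightedPolySpace] at hP
  induction hP using Submodule.span_induction with
  | mem f hf =>
    obtain ⟨k, _, rfl⟩ := hf
    apply continuous_finset_prod
    intro j _
    exact (psi_continuous (k j)).comp (PiLp.continuous_apply 2 _ j)
  | zero => exact continuous_const
  | add f g _ _ hf hg => exact hf.add hg
  | smul c f _ hf => exact hf.const_smul c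


open Polynomial

lemma log_le_aux {s : ℝ} (hs : 1 ≤ s) : Real.log s ≤ (s^2 - (s⁻¹)^2)/4 := by
  have hs0 : (0:ℝ) < s := lt_of_lt_of_le one_pos hs
  have hy0 : 0 ≤ Real.log s := Real.log_nonneg hs
  have hsinh : 2 * Real.log s ≤ Real.sinh (2 * Real.log s) := by
    rcases eq_or_lt_of_le hy0 with h | h
    · simp [← h]
    · exact le_of_lt (Real.self_lt_sinh_iff.mpr (by linarith))
  have h2 : Real.sinh (2 * Real.log s) = (s^2 - (s⁻¹)^2)/2 := by
    rw [Real.sinh_eq, show (2:ℝ) * Real.log s = Real.log s + Real.log s by ring,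
      Real.exp_add, Real.exp_log hs0, neg_add, Real.exp_add, Real.exp_neg, Real.exp_log hs0]
    field_simp
  linarith

lemma lemA_eta (m : ℕ) (a M : ℝ) (ha : 0 < a) (p : Polynomial ℂ) (hm : p.natDegree ≤ m)
    (hma : 2*(m:ℝ) ≤ a^2)
    (hM : ∀ t : ℝ, |t| ≤ a → ‖p.eval (t:ℂ)‖ * Real.exp (-t^2/2) ≤ M) :
    ∀ η : ℝ, η ≠ 0 → |η| ≤ 1 →
      ‖p.eval ((((a/2)*(η+η⁻¹)) : ℝ) : ℂ)‖ * Real.exp (-((a/2)*(η+η⁻¹))^2/2) ≤ M := by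
  set R : Polynomial ℂ := ∑ j ∈ Finset.range (m+1),
    Polynomial.C (p.coeff j * ((a:ℂ)/2)^j) * X^(m-j) * (X^2+1)^j with hRdef
  have hR : ∀ η : ℂ, η ≠ 0 → R.eval η = η^m * p.eval (((a:ℂ)/2)*(η + η⁻¹)) := by
    intro η hη
    rw [hRdef, Polynomial.eval_finset_sum,
      Polynomial.eval_eq_sum_range' (Nat.lt_succ_of_le hm), Finset.mul_sum]
    refine Finset.sum_congr rfl ?_
    intro j hj
    have hjm : j ≤ m := Nat.lt_succ_iff.mp (Finset.mem_range.mp hj)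
    simp only [Polynomial.eval_mul, Polynomial.eval_pow, Polynomial.eval_C, Polynomial.eval_X,
      Polynomial.eval_add, Polynomial.eval_one]
    have hmul : η * (η + η⁻¹) = η^2 + 1 := by
      rw [mul_add, mul_inv_cancel₀ hη]; ring
    have hkey : η^m * (η+η⁻¹)^j = η^(m-j) * (η^2+1)^j := by
      calc η^m * (η+η⁻¹)^j = η^(m-j) * (η^j * (η+η⁻¹)^j) := by
            rw [← mul_assoc, ← pow_add, Nat.sub_add_cancel hjm]
        _ = η^(m-j) * (η^2+1)^j := by rw [← mul_pow, hmul]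
    calc p.coeff j * ((a:ℂ)/2)^j * η^(m-j) * (η^2+1)^j
        = (p.coeff j * ((a:ℂ)/2)^j) * (η^(m-j) * (η^2+1)^j) := by ring
      _ = (p.coeff j * ((a:ℂ)/2)^j) * (η^m * (η+η⁻¹)^j) := by rw [← hkey]
      _ = η^m * (p.coeff j * ((a:ℂ)/2*(η+η⁻¹))^j) := by rw [mul_pow]; ring
  set g : ℂ → ℂ := fun z => R.eval z * Complex.exp (-((a:ℂ)^2/4) * (1 + z^2)) with hgdef
  have hgdiff : Differentiable ℂ g := by
    apply (R.differentiable).mul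
    apply Complex.differentiable_exp.comp
    fun_prop
  have hM0 : (0:ℝ) ≤ M := le_trans (by positivity) (hM 0 (by simpa using le_of_lt ha))
  have hcirc : ∀ z ∈ frontier (Metric.ball (0:ℂ) 1), ‖g z‖ ≤ M := by
    rw [frontier_ball (0:ℂ) one_ne_zero]
    intro z hz
    have hz1 : ‖z‖ = 1 := by
      simpa using (mem_sphere_zero_iff_norm.mp hz)
    have hz0 : z ≠ 0 := by
      intro h; rw [h] at hz1; simp at hz1
    have hnsq : Complex.normSq z = 1 := by rw [Complex.normSq_eq_norm_sq, hz1]; norm_num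
    have h1 : z * (starRingEnd ℂ) z = 1 := by rw [Complex.mul_conj, hnsq]; norm_num
    have hinv : z⁻¹ = (starRingEnd ℂ) z := inv_eq_of_mul_eq_one_right h1
    set t : ℝ := a * z.re with htdef
    have harg : ((a:ℂ)/2) * (z + z⁻¹) = (t:ℂ) := by
      rw [hinv, Complex.add_conj, htdef]; push_cast; ring
    have hRz : ‖R.eval z‖ = ‖p.eval (t:ℂ)‖ := by
      rw [hR z hz0, harg, norm_mul, norm_pow, hz1, one_pow, one_mul]
    have him : z.re^2 + z.im^2 = 1 := by
      have := Complex.normSq_apply z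
      rw [hnsq] at this
      nlinarith [this]
    have hre : (-((a:ℂ)^2/4) * (1 + z^2)).re = -t^2/2 := by
      simp [Complex.mul_re, Complex.mul_im, Complex.add_re, Complex.add_im, Complex.one_re,
        Complex.one_im, Complex.ofReal_re, Complex.ofReal_im, htdef, sq]
      nlinarith [him]
    have hexp : ‖Complex.exp (-((a:ℂ)^2/4) * (1 + z^2))‖ = Real.exp (-t^2/2) := by
      rw [Complex.norm_exp, hre]
    have ht : |t| ≤ a := by
      rw [htdef, abs_mul, abs_of_pos ha]
      calc a * |z.re| ≤ a * 1 := by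
            apply mul_le_mul_of_nonneg_left _ (le_of_lt ha)
            rw [← hz1]; exact Complex.abs_re_le_norm z
        _ = a := mul_one a
    calc ‖g z‖ = ‖p.eval (t:ℂ)‖ * Real.exp (-t^2/2) := by
          rw [hgdef]; simp only [norm_mul]; rw [hRz, hexp]
      _ ≤ M := hM t ht
  have hball : ∀ w : ℂ, ‖w‖ ≤ 1 → ‖g w‖ ≤ M := by
    intro w hw
    apply Complex.norm_le_of_forall_mem_frontier_norm_le Metric.isBounded_ball
      hgdiff.diffContOnCl hcirc
    rw [closure_ball (0:ℂ) one_ne_zero]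
    simpa [Metric.mem_closedBall, dist_zero_right] using hw
  intro η hη0 hη1
  have hηC : (η:ℂ) ≠ 0 := Complex.ofReal_ne_zero.mpr hη0
  have hb := hball (η:ℂ) (by rw [Complex.norm_real, Real.norm_eq_abs]; exact hη1)
  have hηa : (0:ℝ) < |η| := abs_pos.mpr hη0
  have harg2 : ((a:ℂ)/2) * ((η:ℂ) + (η:ℂ)⁻¹) = (((a/2)*(η+η⁻¹) : ℝ) : ℂ) := by push_cast; ring
  have hexpC : -((a:ℂ)^2/4) * (1 + ((η:ℂ))^2) = (((-(a^2/4)*(1+η^2)) : ℝ) : ℂ) := by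
    push_cast; ring
  have hgη : ‖g (η:ℂ)‖ = |η|^m * (‖p.eval ((((a/2)*(η+η⁻¹)):ℝ):ℂ)‖
      * Real.exp (-(a^2/4)*(1+η^2))) := by
    rw [hgdef]
    simp only []
    rw [hR _ hηC, harg2, hexpC]
    simp only [norm_mul, norm_pow, Complex.norm_real, Real.norm_eq_abs,
      Complex.norm_exp, Complex.ofReal_re]
    ring
  have hkey : Real.exp (-((a/2)*(η+η⁻¹))^2/2) ≤ |η|^m * Real.exp (-(a^2/4)*(1+η^2)) := by
    have hs : (1:ℝ) ≤ |η|⁻¹ := (one_le_inv₀ hηa).2 hη1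
    have hlog := log_le_aux hs
    have hlogn : 0 ≤ Real.log |η|⁻¹ := Real.log_nonneg hs
    have hpow : |η|^m = Real.exp ((m:ℝ) * Real.log |η|) := by
      rw [Real.exp_nat_mul, Real.exp_log hηa]
    rw [hpow, ← Real.exp_add]
    apply Real.exp_le_exp.mpr
    have hη2 : ((a/2)*(η+η⁻¹))^2 = (a^2/4)*(η^2 + 2 + (η⁻¹)^2) := by
      field_simp; ring
    have hsq1 : (|η|⁻¹)^2 = (η⁻¹)^2 := by
      rw [← abs_inv, sq_abs]
    have hsq2 : (|η|)^2 = η^2 := sq_abs η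
    have hlog2 : Real.log |η| = - Real.log |η|⁻¹ := by rw [Real.log_inv]; ring
    have hchain : (m:ℝ) * Real.log |η|⁻¹ ≤ (a^2/8) * ((η⁻¹)^2 - η^2) := by
      calc (m:ℝ) * Real.log |η|⁻¹ ≤ (a^2/2) * Real.log |η|⁻¹ := by nlinarith
        _ ≤ (a^2/2) * (((|η|⁻¹)^2 - ((|η|⁻¹)⁻¹)^2)/4) := by
            apply mul_le_mul_of_nonneg_left hlog (by positivity)
        _ = (a^2/8) * ((η⁻¹)^2 - η^2) := by
            rw [hsq1, inv_inv, hsq2]; ring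
    rw [hη2, hlog2]
    linarith
  calc ‖p.eval ((((a/2)*(η+η⁻¹)):ℝ):ℂ)‖ * Real.exp (-((a/2)*(η+η⁻¹))^2/2)
      ≤ ‖p.eval ((((a/2)*(η+η⁻¹)):ℝ):ℂ)‖ * (|η|^m * Real.exp (-(a^2/4)*(1+η^2))) := by
        apply mul_le_mul_of_nonneg_left hkey (norm_nonneg _)
    _ = ‖g (η:ℂ)‖ := by rw [hgη]; ring
    _ ≤ M := hb

lemma lemA_ge (m : ℕ) (a M : ℝ) (ha : 0 < a) (p : Polynomial ℂ) (hm : p.natDegree ≤ m)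
    (hma : 2*(m:ℝ) ≤ a^2)
    (hM : ∀ t : ℝ, |t| ≤ a → ‖p.eval (t:ℂ)‖ * Real.exp (-t^2/2) ≤ M) :
    ∀ x : ℝ, a ≤ x → ‖p.eval (x:ℂ)‖ * Real.exp (-x^2/2) ≤ M := by
  intro x hx
  have hx0 : 0 < x := lt_of_lt_of_le ha hx
  set s := Real.sqrt (x^2 - a^2) with hsdef
  have hs0 : 0 ≤ s := Real.sqrt_nonneg _
  have hs2 : s^2 = x^2 - a^2 := Real.sq_sqrt (by nlinarith)
  set η := (x - s)/a with hηdef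
  have hηpos : 0 < η := by
    apply div_pos _ ha
    nlinarith [hs2, hs0, hx0]
  have hη1 : η ≤ 1 := by
    rw [hηdef, div_le_one ha]
    nlinarith [hs2, hs0, sq_nonneg (s - (x - a))]
  have hmul1 : η * ((x + s)/a) = 1 := by
    rw [hηdef]
    field_simp
    nlinarith [hs2]
  have hinv : η⁻¹ = (x + s)/a := inv_eq_of_mul_eq_one_right hmul1
  have hsum : (a/2)*(η+η⁻¹) = x := by
    rw [hinv, hηdef]
    field_simp
    ring
  have h := lemA_eta m a M ha p hm hma hM η (ne_of_gt hηpos) (by rw [abs_of_pos hηpos]; exact hη1)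
  rwa [hsum] at h

lemma lemA (m : ℕ) (a M : ℝ) (ha : 0 < a) (p : Polynomial ℂ) (hm : p.natDegree ≤ m)
    (hma : 2*(m:ℝ) ≤ a^2)
    (hM : ∀ t : ℝ, |t| ≤ a → ‖p.eval (t:ℂ)‖ * Real.exp (-t^2/2) ≤ M) :
    ∀ x : ℝ, ‖p.eval (x:ℂ)‖ * Real.exp (-x^2/2) ≤ M := by
  intro x
  rcases le_or_gt |x| a with h | h
  · exact hM x h
  rcases le_or_gt a x with hx | hx
  · exact lemA_ge m a M ha p hm hma hM x hx
  · have hxneg : a ≤ -x := by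
      rcases abs_cases x with ⟨h1, _⟩ | ⟨h1, _⟩ <;> linarith
    set q := p.comp (-X : Polynomial ℂ) with hqdef
    have hq : ∀ z : ℂ, q.eval z = p.eval (-z) := by
      intro z; rw [hqdef, Polynomial.eval_comp]; simp
    have hqdeg : q.natDegree ≤ m := by
      have h1 : (-X : Polynomial ℂ).natDegree = 1 := by simp
      calc q.natDegree ≤ p.natDegree * (-X : Polynomial ℂ).natDegree :=
            Polynomial.natDegree_comp_le
        _ ≤ m := by rw [h1, mul_one]; exact hm
    have hqM : ∀ t : ℝ, |t| ≤ a → ‖q.eval (t:ℂ)‖ * Real.exp (-t^2/2) ≤ M := by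
      intro t ht
      rw [hq]
      have hc : -((t:ℝ) : ℂ) = (((-t : ℝ)) : ℂ) := by push_cast; ring
      rw [hc]
      have h2 := hM (-t) (by rwa [abs_neg])
      simpa [neg_sq] using h2
    have h3 := lemA_ge m a M ha q hqdeg hma hqM (-x) hxneg
    rw [hq] at h3
    have hc : ((-x : ℝ) : ℂ) = -(x:ℂ) := by push_cast; ring
    rw [hc, neg_neg] at h3
    simpa [neg_sq] using h3

lemma lemA_real (a M : ℝ) (ha : 0 < a) (p : Polynomial ℝ) (hma : 2*(p.natDegree:ℝ) ≤ a^2)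
    (hM : ∀ t : ℝ, |t| ≤ a → |p.eval t| * Real.exp (-t^2/2) ≤ M) :
    ∀ x : ℝ, |p.eval x| * Real.exp (-x^2/2) ≤ M := by
  intro x
  set pc := p.map (Complex.ofRealHom) with hpcdef
  have hev : ∀ t : ℝ, pc.eval (t:ℂ) = ((p.eval t : ℝ) : ℂ) := by
    intro t
    rw [hpcdef, Polynomial.eval_map]
    exact Polynomial.eval₂_at_apply Complex.ofRealHom t
  have hnorm : ∀ t : ℝ, ‖pc.eval (t:ℂ)‖ = |p.eval t| := by
    intro t; rw [hev, Complex.norm_real, Real.norm_eq_abs]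
  have hdeg : pc.natDegree ≤ p.natDegree := Polynomial.natDegree_map_le
  have h := lemA p.natDegree a M ha pc hdeg hma (fun t ht => by rw [hnorm]; exact hM t ht) x
  rwa [hnorm] at h


end Aux

/-- MRS identity. -/
theorem mrs_identity (q : ℕ) (hq : 1 ≤ q) (n : ℝ) (hn : 0 < n) :
    ∀ P ∈ weightedPolySpace q n,
      (⨆ x : EuclideanSpace ℝ (Fin q), |P x|) =
        ⨆ x : {x : EuclideanSpace ℝ (Fin q) // ∀ i, |x i| ≤ Real.sqrt 2 * n}, |P x.1| := by
  intro P hP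
  set a : ℝ := Real.sqrt 2 * n with hadef
  have ha : 0 < a := mul_pos (Real.sqrt_pos.mpr two_pos) hn
  have ha2 : a ^ 2 = 2 * n ^ 2 := by
    rw [hadef, mul_pow, Real.sq_sqrt (by norm_num : (0:ℝ) ≤ 2)]
  set C : Set (EuclideanSpace ℝ (Fin q)) := {y | ∀ i, |y i| ≤ a} with hCdef
  have hPc : Continuous P := span_continuous q n P hP
  have hCclosed : IsClosed C := by
    have hCeq : C = ⋂ i, {y : EuclideanSpace ℝ (Fin q) | |y i| ≤ a} := by
      ext y; simp [hCdef, Set.mem_iInter]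
    rw [hCeq]
    apply isClosed_iInter
    intro i
    exact IsClosed.preimage (continuous_abs.comp (PiLp.continuous_apply 2 _ i)) isClosed_Iic
  have hCbdd : Bornology.IsBounded C := by
    apply Bornology.IsBounded.subset
      (Metric.isBounded_closedBall (x := (0 : EuclideanSpace ℝ (Fin q))) (r := Real.sqrt q * a))
    intro y hy
    rw [Metric.mem_closedBall, dist_zero_right, EuclideanSpace.norm_eq]
    calc Real.sqrt (∑ i, ‖y i‖ ^ 2) ≤ Real.sqrt (∑ _i : Fin q, a ^ 2) := by
          apply Real.sqrt_le_sqrt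
          apply Finset.sum_le_sum
          intro i _
          rw [Real.norm_eq_abs]
          exact pow_le_pow_left₀ (abs_nonneg _) (hy i) 2
      _ = Real.sqrt q * a := by
          rw [Finset.sum_const, Finset.card_univ, Fintype.card_fin, nsmul_eq_mul,
            Real.sqrt_mul (by positivity), Real.sqrt_sq (le_of_lt ha)]
  have hCcompact : IsCompact C := Metric.isCompact_of_isClosed_isBounded hCclosed hCbdd
  haveI : Nonempty {x : EuclideanSpace ℝ (Fin q) // ∀ i, |x i| ≤ a} :=
    ⟨⟨0, fun i => by simp [le_of_lt ha]⟩⟩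
  set S := ⨆ x : {x : EuclideanSpace ℝ (Fin q) // ∀ i, |x i| ≤ a}, |P x.1| with hSdef
  have hrange : Set.range (fun x : {x : EuclideanSpace ℝ (Fin q) // ∀ i, |x i| ≤ a} => |P x.1|)
      = (fun y => |P y|) '' C := by
    ext r
    constructor
    · rintro ⟨⟨y, hy⟩, rfl⟩; exact ⟨y, hy, rfl⟩
    · rintro ⟨y, hy, rfl⟩; exact ⟨⟨y, hy⟩, rfl⟩
  have hbddC : BddAbove (Set.range
      (fun x : {x : EuclideanSpace ℝ (Fin q) // ∀ i, |x i| ≤ a} => |P x.1|)) := by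
    rw [hrange]
    exact (hCcompact.image hPc.abs).bddAbove
  have hS0 : ∀ y ∈ C, |P y| ≤ S := by
    intro y hy
    exact le_ciSup hbddC ⟨y, hy⟩
  have hstep : ∀ j : ℕ, ∀ x : EuclideanSpace ℝ (Fin q),
      (∀ i : Fin q, j ≤ (i : ℕ) → |x i| ≤ a) → |P x| ≤ S := by
    intro j
    induction j with
    | zero => exact fun x hx => hS0 x (fun i => hx i (Nat.zero_le _))
    | succ j ih =>
      intro x hx
      by_cases hj : j < q
      · set i₀ : Fin q := ⟨j, hj⟩ with hi₀
        obtain ⟨p, hpd, hp⟩ := span_slice q n hn P hP x i₀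
        have hM : ∀ t : ℝ, |t| ≤ a → |p.eval t| * Real.exp (-t ^ 2 / 2) ≤ S := by
          intro t ht
          have hcoords : ∀ i : Fin q, j ≤ (i : ℕ) → |Function.update x i₀ t i| ≤ a := by
            intro i hi
            rcases eq_or_ne i i₀ with rfl | hne
            · rw [Function.update_self]; exact ht
            · rw [Function.update_of_ne hne]
              apply hx i
              have : (i : ℕ) ≠ j := fun h => hne (Fin.ext h)
              omega
          have h4 := ih (WithLp.toLp 2 (Function.update x i₀ t)) hcoords
          rwa [hp t, abs_mul, Real.abs_exp] at h4
        have hdeg : 2 * ((p.natDegree : ℕ) : ℝ) ≤ a ^ 2 := by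
          rw [ha2]; linarith [hpd]
        have hall := lemA_real a S ha p hdeg hM (x i₀)
        have hx0 : |P x| = |p.eval (x i₀)| * Real.exp (-(x i₀) ^ 2 / 2) := by
          have hx' : x = WithLp.toLp 2 (Function.update x i₀ (x i₀)) := by simp
          conv_lhs => rw [hx']
          rw [hp (x i₀), abs_mul, Real.abs_exp]
        rw [hx0]
        exact hall
      · apply ih x
        intro i hi
        exact absurd hi (by have := i.isLt; omega)
  have hmain : ∀ x, |P x| ≤ S := by
    intro x
    apply hstep q x
    intro i hi
    exact absurd hi (Nat.not_le.mpr i.isLt)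
  apply le_antisymm
  · exact ciSup_le hmain
  · apply ciSup_le
    intro x
    have hbdd2 : BddAbove (Set.range fun x : EuclideanSpace ℝ (Fin q) => |P x|) := by
      refine ⟨S, ?_⟩
      rintro r ⟨y, rfl⟩
      exact hmain y
    exact le_ciSup hbdd2 x.1
end

section
/- Let X be a topological space and W a finite-dimensional linear subspace of C_0(X). Let B_W = {f ∈ W : ‖f‖_{∞,X} = 1} and let {f₁,…,f_N} ⊆ B_W be a 1/4-cover of B_W, i.e., every f ∈ B_W satisfies ‖f − f_j‖_{∞,X} ≤ 1/4 for some j. Then there exists a set 𝒞 ⊆ X with |𝒞| ≤ N such that sup_{x∈X} |f(x)| ≤ 2 max_{y∈𝒞} |f(y)| for every f ∈ W; in particular 𝒞 is a norming set for W with 𝔫(W,𝒞) ≤ 2. -/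
open scoped ZeroAtInfty

lemma sup_abs_eq_norm_aux {X : Type*} [TopologicalSpace X] (f : C₀(X, ℝ)) :
    (⨆ x, |f x|) = ‖f‖ := by
  rw [← ZeroAtInftyContinuousMap.norm_toBCF_eq_norm,
    BoundedContinuousFunction.norm_eq_iSup_norm]
  simp [Real.norm_eq_abs]

/-- from a `1/4`-cover of the unit sphere of a finite-dimensional subspace
`W ⊆ C₀(X)` one obtains a norming set for `W` of the same cardinality, with norming
constant at most `2`. -/
theorem cover_gives_norming_set {X : Type*} [TopologicalSpace X]
    (W : Submodule ℝ C₀(X, ℝ)) [FiniteDimensional ℝ W]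
    (N : ℕ) (fs : Fin N → C₀(X, ℝ))
    (hfsW : ∀ i, fs i ∈ W) (hfs_norm : ∀ i, (⨆ x, |fs i x|) = 1)
    (hcover : ∀ f ∈ W, (⨆ x, |f x|) = 1 → ∃ i, ∀ x, |f x - fs i x| ≤ 1/4) :
    ∃ C : Finset X, C.card ≤ N ∧ ∀ f ∈ W, (⨆ x, |f x|) ≤ 2 * ⨆ y : C, |f y.1| := by
  classical
  by_cases hX : Nonempty X
  · -- choose for each `i` a point where `|fs i|` exceeds `3/4`
    have hpt : ∀ i : Fin N, ∃ x : X, (3/4 : ℝ) < |fs i x| := by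
      intro i
      have h : (3/4 : ℝ) < ⨆ x, |fs i x| := by rw [hfs_norm i]; norm_num
      exact exists_lt_of_lt_ciSup h
    choose xf hxf using hpt
    refine ⟨Finset.image xf Finset.univ, ?_, ?_⟩
    · exact (Finset.card_image_le).trans (by simp)
    · intro f hf
      rcases eq_or_ne f 0 with rfl | hf0
      · have h1 : (⨆ x : X, |(0 : C₀(X, ℝ)) x|) = 0 := by simp
        have h2 : (0:ℝ) ≤ ⨆ y : (Finset.image xf Finset.univ : Finset X),
            |(0 : C₀(X, ℝ)) y.1| := by
          refine Real.iSup_nonneg fun y => abs_nonneg _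
        rw [h1]; linarith
      · set g : C₀(X, ℝ) := ‖f‖⁻¹ • f with hg
        have hfn : (0:ℝ) < ‖f‖ := norm_pos_iff.mpr hf0
        have hgW : g ∈ W := W.smul_mem _ hf
        have hgnorm : (⨆ x, |g x|) = 1 := by
          rw [sup_abs_eq_norm_aux, hg]
          rw [norm_smul ‖f‖⁻¹ f, norm_inv, norm_norm]
          field_simp
        obtain ⟨i, hi⟩ := hcover g hgW hgnorm
        -- at the point `xf i`, `|g| ≥ 1/2`
        have h1 : |g (xf i)| ≥ 1/2 := by
          have := hi (xf i)
          have h2 := hxf i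
          have : |fs i (xf i)| - |g (xf i)| ≤ 1/4 := by
            calc |fs i (xf i)| - |g (xf i)| ≤ |g (xf i) - fs i (xf i)| := by
                  rw [abs_sub_comm]; exact abs_sub_abs_le_abs_sub _ _
              _ ≤ 1/4 := hi (xf i)
          linarith
        have hgval : |g (xf i)| = ‖f‖⁻¹ * |f (xf i)| := by
          rw [hg]
          simp [abs_mul, abs_of_pos (inv_pos.mpr hfn)]
        have h3 : ‖f‖ ≤ 2 * |f (xf i)| := by
          rw [hgval] at h1
          have h2 : ‖f‖ * (1/2) ≤ ‖f‖ * (‖f‖⁻¹ * |f (xf i)|) :=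
            mul_le_mul_of_nonneg_left h1 hfn.le
          rw [← mul_assoc, mul_inv_cancel₀ hfn.ne', one_mul] at h2
          linarith
        have hmem : xf i ∈ Finset.image xf Finset.univ := by
          exact Finset.mem_image_of_mem _ (Finset.mem_univ i)
        have h4 : |f (xf i)| ≤ ⨆ y : (Finset.image xf Finset.univ : Finset X), |f y.1| := by
          exact le_ciSup (f := fun y : (Finset.image xf Finset.univ : Finset X) => |f y.1|)
            (Set.Finite.bddAbove (Set.finite_range _)) ⟨xf i, hmem⟩
        rw [sup_abs_eq_norm_aux]
        linarith
  · -- X is empty: everything is zero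
    refine ⟨∅, by simp, fun f hf => ?_⟩
    haveI : IsEmpty X := not_nonempty_iff.mp hX
    have h1 : (⨆ x : X, |f x|) = 0 := by
      rw [iSup_of_empty' fun x : X => |f x|, Real.sSup_empty]
    have h2 : (0:ℝ) ≤ ⨆ y : (∅ : Finset X), |f y.1| :=
      Real.iSup_nonneg fun y => abs_nonneg _
    rw [h1]; linarith
end
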